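/- arXiv:2510.15799 — 4 statements merged into one kernel-verified Lean document; each statement's English description precedes it below -/
import Mathlib

section
/- Let A(n1,n2) be the normalized Fourier coefficients of a Hecke–Maass cusp form for SL(3,Z), satisfying the Hecke relation A(n1,n2) = Σ_{d | gcd(n1,n2)} μ(d) A(n1/d,1) A(1,n2/d). Assume the Ramanujan bound on average Σ_{n ≤ X} |A(1,n)|² ≪_ε X^{1+ε} for all X ≥ 1. Then for any N ≥ 1, ε > 0, and any n1 ≥ 1, one has Σ_{n2 ≤ N/n1²} |A(n1,n2)|² ≪_ε (N^{1+ε}/n1²) · Σ_{d | n1} |A(n1/d,1)|²/d. -/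
open Finset ArithmeticFunction

/-!
The Hecke relation and Cauchy–Schwarz over the divisors of `gcd(n₁, n₂)` give
`|A(n₁,n₂)|² ≤ τ(n₁) Σ_{d ∣ (n₁,n₂)} |A(n₁/d,1)|² |A(1,n₂/d)|²`. Summing over `n₂ ≤ N/n₁²` and
writing `n₂ = d m`, the sum over `m` is an initial segment of length `N/(n₁² d)` of the first-row
sum, which the averaged Ramanujan bound (with `ε/2`) controls by `N^{1+ε/2}/(n₁² d)`. The divisor
bound `τ(n₁) ≪ n₁^ε ≤ N^{ε/2}` absorbs the remaining factor.
-/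

lemma succ_le_pow_of_two_le {y : ℝ} (hy : 2 ≤ y) (k : ℕ) : (k + 1 : ℝ) ≤ y ^ k :=
  calc (k + 1 : ℝ) ≤ 2 ^ k := by exact_mod_cast Nat.lt_two_pow_self
    _ ≤ y ^ k := pow_le_pow_left₀ zero_le_two hy k

lemma succ_le_mul_pow_of_two_rpow_le {δ y : ℝ} (hδ : 0 < δ) (hy : 2 ^ δ ≤ y) (k : ℕ) :
    (k + 1 : ℝ) ≤ (1 + 1 / (δ * Real.log 2)) * y ^ k := by
  set a := δ * Real.log 2
  have ha : 0 < a := mul_pos hδ (Real.log_pos one_lt_two)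
  have hlin : 1 + a * k ≤ y ^ k :=
    calc 1 + a * k ≤ Real.exp (k * a) := by linarith [Real.add_one_le_exp (k * a)]
      _ = (2 ^ δ) ^ k := by rw [Real.exp_nat_mul, Real.rpow_def_of_pos two_pos, mul_comm]
      _ ≤ y ^ k := pow_le_pow_left₀ (by positivity) hy k
  calc (k + 1 : ℝ) ≤ (1 + 1 / a) * (1 + a * k) := by
        field_simp
        nlinarith [sq_nonneg a, (Nat.cast_nonneg k : (0 : ℝ) ≤ k)]
    _ ≤ (1 + 1 / a) * y ^ k := by gcongr

lemma Nat.prod_primeFactors_rpow_pow_factorization {n : ℕ} (hn : n ≠ 0) (δ : ℝ) :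
    ∏ p ∈ n.primeFactors, ((p : ℝ) ^ δ) ^ n.factorization p = (n : ℝ) ^ δ := by
  simp_rw [Real.rpow_pow_comm (Nat.cast_nonneg _)]
  rw [Real.finsetProd_rpow _ _ fun p _ => by positivity]
  congr 1
  exact_mod_cast (Nat.prod_factorization_eq_prod_primeFactors _).symm.trans
    (Nat.prod_factorization_pow_eq_self hn)

theorem Nat.card_divisors_le_mul_rpow {δ : ℝ} (hδ : 0 < δ) :
    ∃ C : ℝ, 0 < C ∧ ∀ n : ℕ, n ≠ 0 → (#n.divisors : ℝ) ≤ C * (n : ℝ) ^ δ := by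
  set B := 1 + 1 / (δ * Real.log 2)
  have hB : 1 ≤ B := le_add_of_nonneg_right (by positivity [Real.log_pos one_lt_two])
  set P := ⌈(2 : ℝ) ^ (1 / δ)⌉₊
  refine ⟨B ^ P, by positivity, fun n hn => ?_⟩
  -- only the primes below `2 ^ (1 / δ)` contribute a factor larger than `1`
  have hlocal : ∀ p ∈ n.primeFactors, (n.factorization p + 1 : ℝ) ≤
      (if p < P then B else 1) * ((p : ℝ) ^ δ) ^ n.factorization p := by
    intro p hp
    have hp2 : (2 : ℝ) ≤ p := by exact_mod_cast (Nat.prime_of_mem_primeFactors hp).two_le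
    split_ifs with hpP
    · exact succ_le_mul_pow_of_two_rpow_le hδ (by gcongr) _
    · rw [one_mul]
      refine succ_le_pow_of_two_le ?_ _
      calc (2 : ℝ) = ((2 : ℝ) ^ (1 / δ)) ^ δ := by
            rw [← Real.rpow_mul zero_le_two, one_div_mul_cancel hδ.ne', Real.rpow_one]
        _ ≤ (p : ℝ) ^ δ := by
            gcongr
            exact (Nat.le_ceil _).trans (by exact_mod_cast not_lt.mp hpP)
  have hsmall : ∏ p ∈ n.primeFactors, (if p < P then B else 1) ≤ B ^ P := by
    rw [prod_ite, prod_const, prod_const_one, mul_one]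
    refine pow_le_pow_right₀ hB ((card_le_card fun p hp => ?_).trans (card_range P).le)
    exact mem_range.mpr (mem_filter.mp hp).2
  calc (#n.divisors : ℝ) = ∏ p ∈ n.primeFactors, (n.factorization p + 1 : ℝ) := by
        rw [Nat.card_divisors hn]; push_cast; rfl
    _ ≤ ∏ p ∈ n.primeFactors, (if p < P then B else 1) * ((p : ℝ) ^ δ) ^ n.factorization p :=
        prod_le_prod (fun _ _ => by positivity) hlocal
    _ ≤ B ^ P * (n : ℝ) ^ δ := by
        rw [prod_mul_distrib, Nat.prod_primeFactors_rpow_pow_factorization hn]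
        gcongr

lemma norm_sum_sq_le_card_mul_sum_norm_sq {ι E : Type*} [SeminormedAddCommGroup E]
    (s : Finset ι) (z : ι → E) : ‖∑ i ∈ s, z i‖ ^ 2 ≤ #s * ∑ i ∈ s, ‖z i‖ ^ 2 :=
  (pow_le_pow_left₀ (norm_nonneg _) (norm_sum_le s z) 2).trans sq_sum_le_card_mul_sum_sq

lemma sum_Icc_ite_dvd {M : Type*} [AddCommMonoid M] {d : ℕ} (hd : 0 < d) (X : ℕ) (g : ℕ → M) :
    ∑ n ∈ Icc 1 X, (if d ∣ n then g (n / d) else 0) = ∑ m ∈ Icc 1 (X / d), g m := by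
  rw [← sum_filter]
  refine sum_nbij' (· / d) (d * ·) (fun n hn => ?_) (fun m hm => ?_)
    (fun n hn => Nat.mul_div_cancel' (mem_filter.mp hn).2)
    (fun m _ => Nat.mul_div_cancel_left m hd) (fun _ _ => rfl)
  · obtain ⟨hn, hdn⟩ := mem_filter.mp hn
    obtain ⟨h1, hX⟩ := mem_Icc.mp hn
    exact mem_Icc.mpr ⟨(Nat.one_le_div_iff hd).mpr (Nat.le_of_dvd h1 hdn), Nat.div_le_div_right hX⟩
  · obtain ⟨h1, hX⟩ := mem_Icc.mp hm
    refine mem_filter.mpr ⟨mem_Icc.mpr ⟨Nat.mul_pos hd h1, ?_⟩, dvd_mul_right d m⟩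
    rw [mul_comm]
    exact (Nat.le_div_iff_mul_le hd).mp hX

lemma Nat.divisors_filter_dvd {m n : ℕ} (hm : m ≠ 0) :
    {d ∈ m.divisors | d ∣ n} = (m.gcd n).divisors := by
  ext d
  simp [Nat.dvd_gcd_iff, hm]

section Hecke

variable {A : ℕ → ℕ → ℂ}

lemma norm_sq_le_card_divisors_mul_sum
    (hHecke : ∀ n1 n2 : ℕ, 0 < n1 → 0 < n2 →
      A n1 n2 = ∑ d ∈ (Nat.gcd n1 n2).divisors,
        ((moebius d : ℤ) : ℂ) * A (n1 / d) 1 * A 1 (n2 / d))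
    {n1 n2 : ℕ} (hn1 : 0 < n1) (hn2 : 0 < n2) :
    ‖A n1 n2‖ ^ 2 ≤ #n1.divisors * ∑ d ∈ n1.divisors,
      if d ∣ n2 then ‖A (n1 / d) 1‖ ^ 2 * ‖A 1 (n2 / d)‖ ^ 2 else 0 := by
  rw [hHecke n1 n2 hn1 hn2, ← sum_filter, Nat.divisors_filter_dvd hn1.ne']
  refine (norm_sum_sq_le_card_mul_sum_norm_sq _ _).trans (mul_le_mul ?_ ?_ (by positivity)
    (by positivity))
  · exact_mod_cast card_le_card (Nat.divisors_subset_of_dvd hn1.ne' (Nat.gcd_dvd_left n1 n2))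
  · refine sum_le_sum fun d _ => ?_
    rw [norm_mul, norm_mul, mul_pow, mul_pow, Complex.norm_intCast]
    have hμ : |((moebius d : ℤ) : ℝ)| ^ 2 ≤ 1 :=
      pow_le_one₀ (abs_nonneg _) (by exact_mod_cast abs_moebius_le_one)
    nlinarith [mul_nonneg (sq_nonneg ‖A (n1 / d) 1‖) (sq_nonneg ‖A 1 (n2 / d)‖)]

lemma sum_norm_sq_le_card_divisors_mul_sum
    (hHecke : ∀ n1 n2 : ℕ, 0 < n1 → 0 < n2 →
      A n1 n2 = ∑ d ∈ (Nat.gcd n1 n2).divisors,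
        ((moebius d : ℤ) : ℂ) * A (n1 / d) 1 * A 1 (n2 / d))
    {n1 : ℕ} (hn1 : 0 < n1) (M : ℕ) :
    ∑ n2 ∈ Icc 1 M, ‖A n1 n2‖ ^ 2 ≤ #n1.divisors *
      ∑ d ∈ n1.divisors, ‖A (n1 / d) 1‖ ^ 2 * ∑ m ∈ Icc 1 (M / d), ‖A 1 m‖ ^ 2 := by
  calc ∑ n2 ∈ Icc 1 M, ‖A n1 n2‖ ^ 2
      ≤ ∑ n2 ∈ Icc 1 M, #n1.divisors * ∑ d ∈ n1.divisors,
          if d ∣ n2 then ‖A (n1 / d) 1‖ ^ 2 * ‖A 1 (n2 / d)‖ ^ 2 else 0 :=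
        sum_le_sum fun n2 hn2 =>
          norm_sq_le_card_divisors_mul_sum hHecke hn1 (mem_Icc.mp hn2).1
    _ = _ := by
        rw [← mul_sum, sum_comm]
        congr 1
        refine sum_congr rfl fun d hd => ?_
        rw [mul_sum]
        exact sum_Icc_ite_dvd (Nat.pos_of_mem_divisors hd) M
          fun m => ‖A (n1 / d) 1‖ ^ 2 * ‖A 1 m‖ ^ 2

end Hecke

lemma div_rpow_le_rpow_div {x q s : ℝ} (hx : 0 ≤ x) (hq : 1 ≤ q) (hs : 1 ≤ s) :
    (x / q) ^ s ≤ x ^ s / q := by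
  rw [Real.div_rpow hx (zero_le_one.trans hq)]
  gcongr
  exact Real.self_le_rpow_of_one_le hq hs

lemma sum_Icc_div_le {a : ℕ → ℝ} {C s : ℝ} (hC : 0 ≤ C) (hs : 1 ≤ s)
    (ha : ∀ X : ℕ, 1 ≤ X → ∑ n ∈ Icc 1 X, a n ≤ C * (X : ℝ) ^ s) (N : ℕ) {q : ℕ} (hq : 0 < q) :
    ∑ n ∈ Icc 1 (N / q), a n ≤ C * (N : ℝ) ^ s / q := by
  rcases Nat.eq_zero_or_pos (N / q) with h0 | hpos
  · rw [h0, Icc_eq_empty_of_lt zero_lt_one, sum_empty]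
    positivity
  calc ∑ n ∈ Icc 1 (N / q), a n ≤ C * ((N / q : ℕ) : ℝ) ^ s := ha _ hpos
    _ ≤ C * ((N : ℝ) / q) ^ s := by gcongr; exact Nat.cast_div_le
    _ ≤ C * (N : ℝ) ^ s / q := by
        rw [mul_div_assoc]
        gcongr
        exact div_rpow_le_rpow_div (Nat.cast_nonneg N) (by exact_mod_cast hq) hs

lemma rpow_le_rpow_half_of_sq_le {x y ε : ℝ} (hx : 0 ≤ x) (hε : 0 ≤ ε) (h : x ^ 2 ≤ y) :
    x ^ ε ≤ y ^ (ε / 2) :=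
  calc x ^ ε = (x ^ 2) ^ (ε / 2) := by
        rw [← Real.rpow_natCast, ← Real.rpow_mul hx]; ring_nf
    _ ≤ y ^ (ε / 2) := by gcongr

/-- averaged Ramanujan bound for `A(n1, n2)` assuming the Hecke relation
and the averaged Ramanujan bound for `A(1, n)`. -/
theorem stmt0 (A : ℕ → ℕ → ℂ)
    (hHecke : ∀ n1 n2 : ℕ, 0 < n1 → 0 < n2 →
      A n1 n2 = ∑ d ∈ (Nat.gcd n1 n2).divisors,
        ((moebius d : ℤ) : ℂ) * A (n1 / d) 1 * A 1 (n2 / d))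
    (hRam : ∀ ε : ℝ, 0 < ε → ∃ C : ℝ, 0 < C ∧ ∀ X : ℕ, 1 ≤ X →
      ∑ n ∈ Finset.Icc 1 X, ‖A 1 n‖ ^ 2 ≤ C * (X : ℝ) ^ (1 + ε)) :
    ∀ ε : ℝ, 0 < ε → ∃ C : ℝ, 0 < C ∧ ∀ N n1 : ℕ, 1 ≤ N → 1 ≤ n1 →
      ∑ n2 ∈ Finset.Icc 1 (N / n1 ^ 2), ‖A n1 n2‖ ^ 2 ≤
        C * ((N : ℝ) ^ (1 + ε) / (n1 : ℝ) ^ 2) *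
          ∑ d ∈ n1.divisors, ‖A (n1 / d) 1‖ ^ 2 / (d : ℝ) := by
  intro ε hε
  obtain ⟨Cτ, hCτ, hτ⟩ := Nat.card_divisors_le_mul_rpow hε
  obtain ⟨CR, hCR, hR⟩ := hRam (ε / 2) (by positivity)
  refine ⟨Cτ * CR, by positivity, fun N n1 _ hn1 => ?_⟩
  rcases lt_or_ge N (n1 ^ 2) with hsmall | hlarge
  · rw [Nat.div_eq_of_lt hsmall, Icc_eq_empty_of_lt zero_lt_one, sum_empty]
    positivity
  have hτN : (#n1.divisors : ℝ) ≤ Cτ * (N : ℝ) ^ (ε / 2) :=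
    (hτ n1 (by omega)).trans <| by
      gcongr
      exact rpow_le_rpow_half_of_sq_le (Nat.cast_nonneg _) hε.le (by exact_mod_cast hlarge)
  have hN : (N : ℝ) ^ (ε / 2) * (N : ℝ) ^ (1 + ε / 2) = (N : ℝ) ^ (1 + ε) := by
    rw [← Real.rpow_add' (Nat.cast_nonneg N) (by positivity)]; ring_nf
  calc ∑ n2 ∈ Icc 1 (N / n1 ^ 2), ‖A n1 n2‖ ^ 2
      ≤ #n1.divisors * ∑ d ∈ n1.divisors,
          ‖A (n1 / d) 1‖ ^ 2 * ∑ m ∈ Icc 1 (N / n1 ^ 2 / d), ‖A 1 m‖ ^ 2 :=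
        sum_norm_sq_le_card_divisors_mul_sum hHecke hn1 _
    _ ≤ Cτ * (N : ℝ) ^ (ε / 2) * ∑ d ∈ n1.divisors,
          ‖A (n1 / d) 1‖ ^ 2 * (CR * (N : ℝ) ^ (1 + ε / 2) / ((n1 ^ 2 * d : ℕ) : ℝ)) := by
        gcongr with d hd
        rw [Nat.div_div_eq_div_mul]
        exact sum_Icc_div_le hCR.le (by linarith) hR N
          (Nat.mul_pos (by positivity) (Nat.pos_of_mem_divisors hd))
    _ = _ := by
        rw [mul_sum, mul_sum]
        refine sum_congr rfl fun d _ => ?_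
        push_cast
        rw [← hN]
        ring
end

section
/- For positive integers q1, q2 and integers h1, h2 with gcd(h_i, q_i) = 1, one has (1/(q1 q2)) Σ_{β mod q1 q2} S(h̄1, β; q1) S(h̄2, β; q2) = δ(q1 = q2) · c_{q1}(h1 − h2), where c_{q1} is the Ramanujan sum modulo q1 and δ is the indicator of equality. -/
open Finset

/-- `e(t) = exp(2πit)`. -/
noncomputable def e2pi (t : ℝ) : ℂ := Complex.exp (2 * Real.pi * Complex.I * t)

/-- Sum over the units of `ZMod c` (zero if `c = 0`). -/
noncomputable def unitsSum (c : ℕ) (F : ℤ → ℤ → ℂ) : ℂ :=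
  if h : c = 0 then 0 else
    haveI : NeZero c := ⟨h⟩
    ∑ x : (ZMod c)ˣ, F (((x : ZMod c).val : ℤ)) ((((x⁻¹ : (ZMod c)ˣ) : ZMod c).val : ℤ))

/-- The Kloosterman sum `S(a, b; c)`. -/
noncomputable def kloosterman (a b : ℤ) (c : ℕ) : ℂ :=
  unitsSum c (fun x xi => e2pi (((a * x + b * xi : ℤ) : ℝ) / (c : ℝ)))

/-- The Ramanujan sum `c_c(a)`. -/
noncomputable def ramanujanSum (c : ℕ) (a : ℤ) : ℂ :=
  unitsSum c (fun x _ => e2pi (((a * x : ℤ) : ℝ) / (c : ℝ)))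



lemma e2pi_add (s t : ℝ) : e2pi (s + t) = e2pi s * e2pi t := by
  simp [e2pi, mul_add, Complex.exp_add]

lemma e2pi_int (n : ℤ) : e2pi n = 1 := by
  have : (2 * Real.pi * Complex.I * (n:ℝ) : ℂ) = (n:ℤ) * (2 * Real.pi * Complex.I) := by
    push_cast; ring
  rw [e2pi, this, Complex.exp_int_mul_two_pi_mul_I]

lemma e2pi_congr {q : ℕ} (hq : 0 < q) {a b : ℤ} (h : (a : ZMod q) = (b : ZMod q)) :
    e2pi ((a : ℝ) / q) = e2pi ((b : ℝ) / q) := by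
  have h' : a ≡ b [ZMOD (q:ℤ)] := (ZMod.intCast_eq_intCast_iff a b q).mp h
  obtain ⟨t, ht⟩ : (q:ℤ) ∣ a - b := Int.ModEq.dvd h'.symm
  have hq' : (q:ℝ) ≠ 0 := Nat.cast_ne_zero.mpr hq.ne'
  have : (a : ℝ) / q = (b : ℝ) / q + (t : ℝ) := by
    field_simp
    have := congrArg (fun z : ℤ => (z : ℝ)) ht
    push_cast at this ⊢
    linarith
  rw [this, e2pi_add, e2pi_int, mul_one]

lemma sum_e2pi (N : ℕ) (hN : 0 < N) (k : ℤ) :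
    ∑ β ∈ Finset.range N, e2pi (((β : ℤ) * k : ℤ) / N) = if (N:ℤ) ∣ k then (N:ℂ) else 0 := by
  have hN' : (N:ℝ) ≠ 0 := Nat.cast_ne_zero.mpr hN.ne'
  have hpow : ∀ β : ℕ, e2pi (((β : ℤ) * k : ℤ) / N) = (e2pi ((k:ℝ)/N)) ^ β := by
    intro β
    rw [e2pi, e2pi, ← Complex.exp_nat_mul]
    congr 1
    push_cast
    ring
  simp only [hpow]
  by_cases hdvd : (N:ℤ) ∣ k
  · obtain ⟨m, hm⟩ := hdvd
    have : (k:ℝ)/N = ((m:ℤ):ℝ) := by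
      rw [hm]; push_cast; field_simp
    rw [if_pos ⟨m, hm⟩, this, e2pi_int]
    simp
  · rw [if_neg hdvd]
    have hzN : (e2pi ((k:ℝ)/N)) ^ N = 1 := by
      rw [e2pi, ← Complex.exp_nat_mul]
      have hNc : (N:ℂ) ≠ 0 := Nat.cast_ne_zero.mpr hN.ne'
      have : (N:ℂ) * (2 * Real.pi * Complex.I * (((k:ℝ)/N : ℝ) : ℂ)) = (k:ℤ) * (2*Real.pi*Complex.I) := by
        push_cast
        field_simp
      rw [this, Complex.exp_int_mul_two_pi_mul_I]
    have hz1 : e2pi ((k:ℝ)/N) ≠ 1 := by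
      intro h
      rw [e2pi, Complex.exp_eq_one_iff] at h
      obtain ⟨n, hn⟩ := h
      apply hdvd
      have hπ : (2 * Real.pi * Complex.I : ℂ) ≠ 0 := by
        simp [Real.pi_ne_zero, Complex.I_ne_zero]
      have h2 : (((k:ℝ)/N : ℝ) : ℂ) = (n:ℂ) := by
        rw [mul_comm] at hn
        exact mul_right_cancel₀ hπ (by linear_combination hn)
      have h3 : (k:ℝ)/N = (n:ℝ) := by exact_mod_cast h2
      refine ⟨n, ?_⟩
      have h4 : (k:ℝ) = (N:ℝ) * n := by field_simp at h3; linarith [h3]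
      exact_mod_cast h4
    rw [geom_sum_eq hz1, hzN]
    simp

lemma stmt3_inner (q1 q2 : ℕ) (hq1 : 0 < q1) (hq2 : 0 < q2) (a b : ℤ)
    (xv yv xiv yiv : ℕ) :
    ∑ β ∈ Finset.range (q1 * q2),
        e2pi (((a * (xv:ℤ) + (β:ℤ) * (xiv:ℤ) : ℤ) : ℝ) / (q1:ℝ)) *
        e2pi (((b * (yv:ℤ) + (β:ℤ) * (yiv:ℤ) : ℤ) : ℝ) / (q2:ℝ))
    = e2pi (((a * (xv:ℤ) : ℤ) : ℝ) / (q1:ℝ)) * e2pi (((b * (yv:ℤ) : ℤ) : ℝ) / (q2:ℝ)) *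
      (if ((q1*q2:ℕ):ℤ) ∣ ((xiv * q2 + yiv * q1 : ℕ):ℤ) then ((q1*q2:ℕ):ℂ) else 0) := by
  have hq1' : (q1:ℝ) ≠ 0 := Nat.cast_ne_zero.mpr hq1.ne'
  have hq2' : (q2:ℝ) ≠ 0 := Nat.cast_ne_zero.mpr hq2.ne'
  have hsummand : ∀ β : ℕ,
      e2pi (((a * (xv:ℤ) + (β:ℤ) * (xiv:ℤ) : ℤ) : ℝ) / (q1:ℝ)) *
      e2pi (((b * (yv:ℤ) + (β:ℤ) * (yiv:ℤ) : ℤ) : ℝ) / (q2:ℝ))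
      = e2pi (((a * (xv:ℤ) : ℤ) : ℝ) / (q1:ℝ)) * e2pi (((b * (yv:ℤ) : ℤ) : ℝ) / (q2:ℝ)) *
        e2pi ((((β:ℤ) * ((xiv * q2 + yiv * q1 : ℕ):ℤ) : ℤ) : ℝ) / ((q1*q2:ℕ):ℝ)) := by
    intro β
    rw [← e2pi_add, ← e2pi_add, ← e2pi_add]
    congr 1
    push_cast
    field_simp
    ring
  simp only [hsummand]
  rw [← Finset.mul_sum, sum_e2pi (q1*q2) (Nat.mul_pos hq1 hq2)]


/-- for positive `q1, q2` and `h_i` coprime to `q_i` (with integer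
inverses `hb_i` mod `q_i`),
`(1/(q1 q2)) Σ_{β mod q1 q2} S(h̄1, β; q1) S(h̄2, β; q2) = δ(q1 = q2) · c_{q1}(h1 − h2)`. -/
theorem stmt3 (q1 q2 : ℕ) (hq1 : 0 < q1) (hq2 : 0 < q2)
    (h1 h2 hb1 hb2 : ℤ)
    (hinv1 : h1 * hb1 ≡ 1 [ZMOD (q1 : ℤ)])
    (hinv2 : h2 * hb2 ≡ 1 [ZMOD (q2 : ℤ)]) :
    (1 / ((q1 : ℂ) * (q2 : ℂ))) *
      ∑ β ∈ Finset.range (q1 * q2), kloosterman hb1 (β : ℤ) q1 * kloosterman hb2 (β : ℤ) q2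
    = if q1 = q2 then ramanujanSum q1 (h1 - h2) else 0 := by
  haveI : NeZero q1 := ⟨hq1.ne'⟩
  haveI : NeZero q2 := ⟨hq2.ne'⟩
  have key : ∑ β ∈ Finset.range (q1*q2), kloosterman hb1 (β:ℤ) q1 * kloosterman hb2 (β:ℤ) q2
      = ∑ x : (ZMod q1)ˣ, ∑ y : (ZMod q2)ˣ,
          e2pi (((hb1 * (((x : ZMod q1)).val :ℤ) :ℤ):ℝ)/(q1:ℝ)) *
          e2pi (((hb2 * (((y : ZMod q2)).val :ℤ) :ℤ):ℝ)/(q2:ℝ)) *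
          (if ((q1*q2:ℕ):ℤ) ∣ ((((x⁻¹ : (ZMod q1)ˣ) : ZMod q1).val * q2
              + ((y⁻¹ : (ZMod q2)ˣ) : ZMod q2).val * q1 : ℕ):ℤ)
            then ((q1*q2:ℕ):ℂ) else 0) := by
    simp only [kloosterman, unitsSum, dif_neg hq1.ne', dif_neg hq2.ne', Finset.sum_mul_sum]
    rw [Finset.sum_comm]
    refine Finset.sum_congr rfl fun x _ => ?_
    rw [Finset.sum_comm]
    refine Finset.sum_congr rfl fun y _ => ?_
    exact stmt3_inner q1 q2 hq1 hq2 hb1 hb2 _ _ _ _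
  by_cases hq : q1 = q2
  · subst hq
    rw [if_pos rfl, key]
    have e1 : (h1 : ZMod q1) * (hb1 : ZMod q1) = 1 := by
      have h := (ZMod.intCast_eq_intCast_iff (h1*hb1) 1 q1).mpr hinv1
      push_cast at h; exact h
    have e2 : (h2 : ZMod q1) * (hb2 : ZMod q1) = 1 := by
      have h := (ZMod.intCast_eq_intCast_iff (h2*hb2) 1 q1).mpr hinv2
      push_cast at h; exact h
    have hcond : ∀ (x y : (ZMod q1)ˣ),
        (((q1*q1:ℕ):ℤ) ∣ ((((x⁻¹ : (ZMod q1)ˣ) : ZMod q1).val * q1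
            + ((y⁻¹ : (ZMod q1)ˣ) : ZMod q1).val * q1 : ℕ):ℤ)) ↔ y = -x := by
      intro x y
      rw [Int.natCast_dvd_natCast, ← add_mul, Nat.mul_dvd_mul_iff_right hq1,
        ← ZMod.natCast_eq_zero_iff]
      push_cast [ZMod.natCast_val, ZMod.cast_id]
      constructor
      · intro h
        have h' : (y⁻¹ : (ZMod q1)ˣ) = -(x⁻¹) := by
          apply Units.ext
          rw [Units.val_neg]
          linear_combination h
        rw [← inv_neg] at h'
        exact inv_injective h'
      · rintro rfl
        rw [inv_neg, Units.val_neg]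
        ring
    simp only [hcond, mul_ite, mul_zero]
    rw [Finset.sum_congr rfl (fun x _ => Finset.sum_ite_eq' Finset.univ (-x) _)]
    simp only [Finset.mem_univ, if_true]
    -- construct the reindexing unit w = -(h1 h2)
    have wv : (-((h1:ZMod q1) * (h2:ZMod q1))) * (-((hb1:ZMod q1) * (hb2:ZMod q1))) = 1 := by
      linear_combination ((hb2 : ZMod q1) * (h2:ZMod q1)) * e1 + e2
    have wv' : (-((hb1:ZMod q1) * (hb2:ZMod q1))) * (-((h1:ZMod q1) * (h2:ZMod q1))) = 1 := by
      linear_combination ((hb2 : ZMod q1) * (h2:ZMod q1)) * e1 + e2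
    set w : (ZMod q1)ˣ := ⟨-((h1:ZMod q1) * (h2:ZMod q1)), -((hb1:ZMod q1) * (hb2:ZMod q1)), wv, wv'⟩ with hwdef
    have hw : (w : ZMod q1) = -((h1:ZMod q1) * (h2:ZMod q1)) := rfl
    have hRam : (∑ x : (ZMod q1)ˣ,
        e2pi (((hb1 * (((x : ZMod q1)).val :ℤ) :ℤ):ℝ)/(q1:ℝ)) *
        e2pi (((hb2 * ((((-x) : (ZMod q1)ˣ) : ZMod q1).val :ℤ) :ℤ):ℝ)/(q1:ℝ)))
        = ramanujanSum q1 (h1 - h2) := by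
      rw [ramanujanSum, unitsSum, dif_neg hq1.ne']
      refine (Fintype.sum_equiv (Equiv.mulLeft w) _ _ ?_).symm
      intro z
      show e2pi ((((h1 - h2) * (((z : ZMod q1)).val :ℤ) :ℤ):ℝ)/(q1:ℝ)) = _
      rw [← e2pi_add, ← add_div, ← Int.cast_add]
      refine e2pi_congr hq1 ?_
      push_cast [ZMod.natCast_val, ZMod.cast_id, Units.val_mul, Units.val_neg]
      simp only [Equiv.coe_mulLeft, Units.val_mul, hw]
      linear_combination ((h2:ZMod q1) * ((z : (ZMod q1)ˣ) : ZMod q1)) * e1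
        - ((h1:ZMod q1) * ((z : (ZMod q1)ˣ) : ZMod q1)) * e2
    rw [← Finset.sum_mul, hRam]
    have hq1c : (q1:ℂ) ≠ 0 := Nat.cast_ne_zero.mpr hq1.ne'
    have hKc : ((q1*q1:ℕ):ℂ) = (q1:ℂ)*(q1:ℂ) := by push_cast; ring
    rw [hKc]
    field_simp
  · rw [if_neg hq, key]
    have hzero : ∀ (x : (ZMod q1)ˣ) (y : (ZMod q2)ˣ),
        ¬ ((q1*q2:ℕ):ℤ) ∣ ((((x⁻¹ : (ZMod q1)ˣ) : ZMod q1).val * q2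
            + ((y⁻¹ : (ZMod q2)ˣ) : ZMod q2).val * q1 : ℕ):ℤ) := by
      intro x y hdvd
      rw [Int.natCast_dvd_natCast] at hdvd
      set A := ((x⁻¹ : (ZMod q1)ˣ) : ZMod q1).val
      set B := ((y⁻¹ : (ZMod q2)ˣ) : ZMod q2).val
      have hd1 : q1 ∣ A * q2 := by
        have h := Nat.dvd_sub (dvd_trans (dvd_mul_right q1 q2) hdvd) (dvd_mul_left q1 B)
        simpa using h
      have hd2 : q2 ∣ B * q1 := by
        have h := Nat.dvd_sub (dvd_trans (dvd_mul_left q2 q1) hdvd) (dvd_mul_left q2 A)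
        simpa using h
      have c1 : Nat.Coprime q1 A := (ZMod.val_coe_unit_coprime (x⁻¹ : (ZMod q1)ˣ)).symm
      have c2 : Nat.Coprime q2 B := (ZMod.val_coe_unit_coprime (y⁻¹ : (ZMod q2)ˣ)).symm
      exact hq (Nat.dvd_antisymm (c1.dvd_of_dvd_mul_left hd1) (c2.dvd_of_dvd_mul_left hd2))
    have h0 : (∑ x : (ZMod q1)ˣ, ∑ y : (ZMod q2)ˣ,
          e2pi (((hb1 * (((x : ZMod q1)).val :ℤ) :ℤ):ℝ)/(q1:ℝ)) *
          e2pi (((hb2 * (((y : ZMod q2)).val :ℤ) :ℤ):ℝ)/(q2:ℝ)) *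
          (if ((q1*q2:ℕ):ℤ) ∣ ((((x⁻¹ : (ZMod q1)ˣ) : ZMod q1).val * q2
              + ((y⁻¹ : (ZMod q2)ˣ) : ZMod q2).val * q1 : ℕ):ℤ)
            then ((q1*q2:ℕ):ℂ) else 0)) = 0 :=
      Finset.sum_eq_zero fun x _ => Finset.sum_eq_zero fun y _ => by
        rw [if_neg (hzero x y), mul_zero]
    rw [h0, mul_zero]
end

section
/- Let q1, q2 be positive integers, d = gcd(q1,q2), v1 = gcd(q1/d, d^∞), v2 = gcd(q2/d, d^∞), u1 = q1/(v1 d), u2 = q2/(v2 d), where gcd(a, b^∞) denotes the largest divisor of a composed only of primes dividing b. Then q1 = d v1 u1, q2 = d v2 u2, gcd(u1, u2) = 1, and gcd(u_i, d v1 v2) = 1 for i = 1, 2. -/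
/-!
Put `n_i = q_i / d`. Then `gcd(n1, n2) = 1`, and `u_i = n_i / v_i` divides `n_i`, so
`gcd(u1, u2) = 1`. Dividing `n_i` by its `d`-smooth part `v_i` leaves a number coprime to `d`,
hence coprime to every `d`-smooth number, in particular to `v1` and `v2`.
-/

open Finset

/-- `gcd(a, b^∞)`: the largest divisor of `a` composed only of primes dividing `b`. -/
def smoothPart (a b : ℕ) : ℕ :=
  ∏ p ∈ a.primeFactors, if p ∣ b then p ^ a.factorization p else 1

lemma smoothPart_dvd (a b : ℕ) : smoothPart a b ∣ a := by
  rcases eq_or_ne a 0 with rfl | ha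
  · exact dvd_zero _
  conv_rhs => rw [Nat.prod_primeFactors_pow_factorization ha]
  refine prod_dvd_prod_of_dvd _ _ fun p _ => ?_
  split_ifs
  exacts [dvd_rfl, one_dvd _]

lemma pow_factorization_dvd_smoothPart {p a b : ℕ} (hpb : p ∣ b) :
    p ^ a.factorization p ∣ smoothPart a b := by
  by_cases hp : p ∈ a.primeFactors
  · simpa [smoothPart, hpb] using
      dvd_prod_of_mem (fun p => if p ∣ b then p ^ a.factorization p else 1) hp
  · rw [← Nat.support_factorization, Finsupp.notMem_support_iff] at hp
    simp [hp]

lemma coprime_div_smoothPart {a : ℕ} (b : ℕ) (ha : a ≠ 0) :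
    Nat.Coprime (a / smoothPart a b) b := by
  refine Nat.coprime_of_dvd fun p hp hpu hpb => Nat.pow_succ_factorization_not_dvd ha hp ?_
  calc p ^ (a.factorization p + 1) = p ^ a.factorization p * p := pow_succ _ _
    _ ∣ smoothPart a b * (a / smoothPart a b) :=
      mul_dvd_mul (pow_factorization_dvd_smoothPart hpb) hpu
    _ = a := Nat.mul_div_cancel' (smoothPart_dvd a b)

lemma Nat.Coprime.smoothPart_right {n b : ℕ} (h : Nat.Coprime n b) (a : ℕ) :
    Nat.Coprime n (smoothPart a b) := by
  refine Nat.Coprime.prod_right fun p _ => ?_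
  split_ifs with hpb
  · exact (h.coprime_dvd_right hpb).pow_right _
  · exact Nat.coprime_one_right n

lemma mul_smoothPart_mul_div_eq {q d : ℕ} (hd : d ∣ q) :
    d * smoothPart (q / d) d * (q / (smoothPart (q / d) d * d)) = q := by
  rw [mul_comm _ d, ← Nat.div_div_eq_div_mul, mul_assoc,
    Nat.mul_div_cancel' (smoothPart_dvd _ _), Nat.mul_div_cancel' hd]

/-- with `d = gcd(q1,q2)`, `v_i = gcd(q_i/d, d^∞)`, `u_i = q_i/(v_i d)`,
one has `q_i = d v_i u_i`, `gcd(u1,u2) = 1` and `gcd(u_i, d v1 v2) = 1`. -/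
theorem stmt5 (q1 q2 : ℕ) (hq1 : 0 < q1) (hq2 : 0 < q2) :
    let d := Nat.gcd q1 q2
    let v1 := smoothPart (q1 / d) d
    let v2 := smoothPart (q2 / d) d
    let u1 := q1 / (v1 * d)
    let u2 := q2 / (v2 * d)
    q1 = d * v1 * u1 ∧ q2 = d * v2 * u2 ∧ Nat.Coprime u1 u2 ∧
      Nat.Coprime u1 (d * v1 * v2) ∧ Nat.Coprime u2 (d * v1 * v2) := by
  intro d v1 v2 u1 u2
  have hd : 0 < d := Nat.gcd_pos_of_pos_left q2 hq1
  have hu1 : u1 = q1 / d / v1 := by rw [Nat.div_div_eq_div_mul, mul_comm]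
  have hu2 : u2 = q2 / d / v2 := by rw [Nat.div_div_eq_div_mul, mul_comm]
  have hu1d : Nat.Coprime u1 d := hu1 ▸ coprime_div_smoothPart d
    (Nat.div_pos (Nat.gcd_le_left q2 hq1) hd).ne'
  have hu2d : Nat.Coprime u2 d := hu2 ▸ coprime_div_smoothPart d
    (Nat.div_pos (Nat.gcd_le_right q1 hq2) hd).ne'
  refine ⟨(mul_smoothPart_mul_div_eq (Nat.gcd_dvd_left q1 q2)).symm,
    (mul_smoothPart_mul_div_eq (Nat.gcd_dvd_right q1 q2)).symm, ?_,
    (hu1d.mul_right (hu1d.smoothPart_right _)).mul_right (hu1d.smoothPart_right _),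
    (hu2d.mul_right (hu2d.smoothPart_right _)).mul_right (hu2d.smoothPart_right _)⟩
  rw [hu1, hu2]
  exact ((Nat.coprime_div_gcd_div_gcd hd).coprime_dvd_left
    (Nat.div_dvd_of_dvd (smoothPart_dvd _ _))).coprime_dvd_right
    (Nat.div_dvd_of_dvd (smoothPart_dvd _ _))
end

section
/- First derivative bound / non-stationary phase: let f be real-valued and smooth on [a,b] with |f'(x)| ≥ Θ > 0 and |f^{(j)}(x)| ≤ C_j Θ for all j ≥ 2 and x ∈ [a,b], and let g be smooth, supported in [a,b], with |g^{(j)}(x)| ≤ D_j for all j ≥ 0 (with g and all its derivatives vanishing at a and b). Then for every positive integer J, |∫_a^b g(x) e(f(x)) dx| ≪_{J, a, b, C_j, D_j} Θ^{−J}, where e(t) = exp(2πit). -/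
open intervalIntegral

open Set Metric Function Filter


lemma iteratedDeriv_congr_nhds {n : ℕ} {f g : ℝ → ℂ} {x : ℝ} (h : f =ᶠ[nhds x] g) :
    iteratedDeriv n f x = iteratedDeriv n g x := by
  rw [iteratedDeriv_eq_iteratedFDeriv, iteratedDeriv_eq_iteratedFDeriv]
  congr 1
  rw [← iteratedFDerivWithin_univ, ← iteratedFDerivWithin_univ]
  exact Filter.EventuallyEq.iteratedFDerivWithin_eq (by rwa [nhdsWithin_univ]) h.self_of_nhds n

lemma normMulLe {f g : ℝ → ℂ} (hf : ContDiff ℝ (⊤ : ℕ∞) f) (hg : ContDiff ℝ (⊤ : ℕ∞) g)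
    (x : ℝ) (n : ℕ) :
    ‖iteratedDeriv n (fun y => f y * g y) x‖ ≤ ∑ i ∈ Finset.range (n + 1),
      (n.choose i : ℝ) * ‖iteratedDeriv i f x‖ * ‖iteratedDeriv (n - i) g x‖ := by
  simp_rw [← norm_iteratedFDeriv_eq_norm_iteratedDeriv]
  exact norm_iteratedFDeriv_mul_le hf hg x (by exact_mod_cast le_top)

lemma iteratedDeriv_clm_comp (L : ℝ →L[ℝ] ℂ) {u : ℝ → ℝ} (hu : ContDiff ℝ (⊤ : ℕ∞) u)
    (i : ℕ) (x : ℝ) : iteratedDeriv i (fun y => L (u y)) x = L (iteratedDeriv i u x) := by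
  have h := L.iteratedFDeriv_comp_left (hu.contDiffAt (x := x)) (n := (⊤ : ℕ∞)) (i := i) (by exact_mod_cast le_top)
  rw [iteratedDeriv_eq_iteratedFDeriv, iteratedDeriv_eq_iteratedFDeriv]
  have h2 : (fun y => L (u y)) = (L ∘ u) := rfl
  rw [h2, h]
  simp

lemma iteratedDeriv_iterate {i k : ℕ} {f : ℝ → ℝ} (x : ℝ) :
    iteratedDeriv i (deriv^[k] f) x = iteratedDeriv (i + k) f x := by
  rw [iteratedDeriv_eq_iterate, iteratedDeriv_eq_iterate, ← Function.iterate_add_apply]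

lemma choose_le_two_pow' (m i : ℕ) : (m.choose i : ℝ) ≤ 2 ^ m := by
  have : m.choose i ≤ 2 ^ m := by
    rcases le_or_gt i m with h | h
    · calc m.choose i ≤ ∑ j ∈ Finset.range (m+1), m.choose j :=
            Finset.single_le_sum (fun j _ => Nat.zero_le _) (Finset.mem_range.mpr (by omega))
      _ = 2 ^ m := Nat.sum_range_choose m
    · simp [Nat.choose_eq_zero_of_lt h]
  exact_mod_cast this

lemma normPhase (r : ℝ) : ‖(2 * (Real.pi:ℂ) * Complex.I * (r:ℂ))‖ = 2 * Real.pi * |r| := by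
  simp [norm_mul, Complex.norm_I, Complex.norm_real, Real.norm_eq_abs,
    abs_of_pos Real.pi_pos]

lemma invBound (a b : ℝ) (C : ℕ → ℝ) (m : ℕ) :
    ∃ B : ℝ, 0 < B ∧ ∀ (f : ℝ → ℝ) (Θ : ℝ), 0 < Θ →
      ContDiff ℝ (⊤ : ℕ∞) f →
      (∀ x ∈ Set.Icc a b, Θ ≤ |deriv f x|) →
      (∀ j : ℕ, 2 ≤ j → ∀ x ∈ Set.Icc a b, |iteratedDeriv j f x| ≤ C j * Θ) →
      ∀ (w : ℝ → ℂ) (V : Set ℝ), IsOpen V → Set.Icc a b ⊆ V → ContDiff ℝ (⊤ : ℕ∞) w →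
      (∀ x ∈ V, deriv f x ≠ 0) →
      (∀ x ∈ V, w x = (2 * Real.pi * Complex.I * deriv f x)⁻¹) →
      ∀ i ≤ m, ∀ x ∈ Set.Icc a b, ‖iteratedDeriv i w x‖ ≤ B / Θ := by
  induction m with
  | zero =>
    refine ⟨1, one_pos, ?_⟩
    intro f Θ hΘ hf hlow hC w V hV hIccV hwcd hne hwV i hi x hx
    interval_cases i
    rw [iteratedDeriv_zero, hwV x (hIccV hx), norm_inv, normPhase]
    rw [div_eq_mul_inv, one_mul]
    have h1 : Θ ≤ 2 * Real.pi * |deriv f x| := by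
      have := hlow x hx
      nlinarith [Real.pi_gt_three, abs_nonneg (deriv f x)]
    exact inv_anti₀ hΘ h1
  | succ m IH =>
    obtain ⟨B, hB, hind⟩ := IH
    set Cmax : ℝ := 1 + ∑ i ∈ Finset.range (m + 3), |C i| with hCmaxdef
    have hCmax1 : 1 ≤ Cmax := by
      have : (0:ℝ) ≤ ∑ i ∈ Finset.range (m + 3), |C i| :=
        Finset.sum_nonneg fun _ _ => abs_nonneg _
      linarith
    have hCle : ∀ j ≤ m + 2, C j ≤ Cmax := by
      intro j hj
      have h1 : C j ≤ |C j| := le_abs_self _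
      have h2 : |C j| ≤ ∑ i ∈ Finset.range (m + 3), |C i| :=
        Finset.single_le_sum (f := fun i => |C i|) (fun _ _ => abs_nonneg _) (Finset.mem_range.mpr (by omega : j < m + 3))
      linarith
    set B' : ℝ := max B ((m+1) * 2^m * (2 * Real.pi * Cmax) * ((m+1) * 2^m * B^2)) with hB'def
    refine ⟨B', lt_of_lt_of_le hB (le_max_left _ _), ?_⟩
    intro f Θ hΘ hf hlow hC w V hV hIccV hwcd hne hwV i hi x hx
    rcases Nat.lt_succ_iff_lt_or_eq.mp (Nat.lt_succ_of_le hi) with hlt | heq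
    · have := hind f Θ hΘ hf hlow hC w V hV hIccV hwcd hne hwV i (by omega) x hx
      exact this.trans (by gcongr; exact le_max_left _ _)
    · subst heq
      set L : ℝ →L[ℝ] ℂ := (-(2*(Real.pi:ℂ)*Complex.I)) • Complex.ofRealCLM with hLdef
      set A : ℝ → ℂ := fun y => L (deriv^[2] f y) with hAdef
      have hf2 : ContDiff ℝ (⊤:ℕ∞) (deriv^[2] f) := hf.iterate_deriv 2
      have hAcd : ContDiff ℝ (⊤:ℕ∞) A := L.contDiff.comp hf2
      have hAeq : ∀ y, A y = -(2*(Real.pi:ℂ)*Complex.I) * ((deriv^[2] f y : ℝ) : ℂ) := by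
        intro y
        simp [hAdef, hLdef, smul_eq_mul]
      have hit2 : deriv^[2] f = deriv (deriv f) := by
        rw [Function.iterate_succ_apply', Function.iterate_one]
      have hderiv : ∀ y ∈ V, deriv w y = A y * (w y * w y) := by
        intro y hy
        have h1 : Differentiable ℝ (deriv f) := by
          have := (hf.iterate_deriv 1).differentiable (by simp)
          simpa [Function.iterate_one] using this
        have hdf : HasDerivAt (deriv f) (deriv^[2] f y) y := by
          rw [hit2]; exact (h1 y).hasDerivAt
        have hF : HasDerivAt (fun z => 2*(Real.pi:ℂ)*Complex.I*((deriv f z : ℝ):ℂ))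
            (2*(Real.pi:ℂ)*Complex.I*((deriv^[2] f y : ℝ):ℂ)) y :=
          (hdf.ofReal_comp).const_mul (2*(Real.pi:ℂ)*Complex.I)
        have hne' : (2*(Real.pi:ℂ)*Complex.I*((deriv f y : ℝ):ℂ)) ≠ 0 :=
          mul_ne_zero (mul_ne_zero (mul_ne_zero two_ne_zero
            (by exact_mod_cast Real.pi_ne_zero)) Complex.I_ne_zero)
            (Complex.ofReal_ne_zero.mpr (hne y hy))
        have hiv := (hasDerivAt_const y (1:ℂ)).fun_div hF hne'
        simp only [one_div, zero_mul, one_mul, zero_sub] at hiv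
        have hwev : w =ᶠ[nhds y] fun z => (2*(Real.pi:ℂ)*Complex.I*((deriv f z : ℝ):ℂ))⁻¹ :=
          eventually_of_mem (hV.mem_nhds hy) (fun z hz => hwV z hz)
        rw [hwev.deriv_eq, hiv.deriv, hAeq y, hwV y hy]
        rw [div_eq_mul_inv, pow_two, mul_inv]
        ring
      have key : iteratedDeriv (m+1) w x = iteratedDeriv m (fun y => A y * (w y * w y)) x := by
        rw [iteratedDeriv_succ']
        exact iteratedDeriv_congr_nhds (eventually_of_mem (hV.mem_nhds (hIccV hx)) hderiv)
      rw [key]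
      have hwwcd : ContDiff ℝ (⊤:ℕ∞) (fun y => w y * w y) := hwcd.mul hwcd
      have hsum := normMulLe hAcd hwwcd x m
      have hBΘ : (0:ℝ) ≤ B/Θ := by positivity
      have hAbound : ∀ i' ≤ m, ‖iteratedDeriv i' A x‖ ≤ 2 * Real.pi * Cmax * Θ := by
        intro i' hi'
        rw [hAdef, iteratedDeriv_clm_comp L hf2 i' x, iteratedDeriv_iterate x]
        have h2 : ∀ r : ℝ, ‖L r‖ = 2*Real.pi*|r| := by
          intro r
          rw [hLdef, ContinuousLinearMap.smul_apply, norm_smul, Complex.ofRealCLM_apply]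
          rw [norm_neg, Complex.norm_real, Real.norm_eq_abs]
          rw [show ‖2 * (Real.pi:ℂ) * Complex.I‖ = 2 * Real.pi by
            simp [norm_mul, Complex.norm_I, Complex.norm_real, Real.norm_eq_abs,
              abs_of_pos Real.pi_pos]]
        rw [h2]
        have h3 := hC (i'+2) (by omega) x hx
        have h4 : C (i'+2) ≤ Cmax := hCle (i'+2) (by omega)
        have h5 : |iteratedDeriv (i'+2) f x| ≤ Cmax * Θ :=
          h3.trans (mul_le_mul_of_nonneg_right h4 hΘ.le)
        nlinarith [Real.pi_pos]
      have hwwbound : ∀ p ≤ m, ‖iteratedDeriv p (fun y => w y * w y) x‖ ≤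
          ((m:ℝ)+1) * 2^m * (B/Θ) * (B/Θ) := by
        intro p hp
        have h1 := normMulLe hwcd hwcd x p
        have h2 : ∀ q ∈ Finset.range (p+1), ((p.choose q : ℝ) * ‖iteratedDeriv q w x‖ *
            ‖iteratedDeriv (p - q) w x‖) ≤ 2^m * (B/Θ) * (B/Θ) := by
          intro q hq
          have hq' := Finset.mem_range.mp hq
          have e1 := hind f Θ hΘ hf hlow hC w V hV hIccV hwcd hne hwV q (by omega) x hx
          have e2 := hind f Θ hΘ hf hlow hC w V hV hIccV hwcd hne hwV (p - q) (by omega) x hx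
          have e3 : (p.choose q : ℝ) ≤ 2^m := (choose_le_two_pow' p q).trans
            (by
              have : (2:ℝ)^p ≤ 2^m := by
                exact_mod_cast Nat.pow_le_pow_right (by norm_num) hp
              exact this)
          exact mul_le_mul (mul_le_mul e3 e1 (norm_nonneg _) (by positivity)) e2
            (norm_nonneg _) (by positivity)
        have h3 := (Finset.sum_le_card_nsmul _ _ _ h2)
        rw [Finset.card_range, nsmul_eq_mul] at h3
        have h4 : ((p:ℝ)+1) ≤ (m:ℝ)+1 := by exact_mod_cast Nat.succ_le_succ hp
        calc ‖iteratedDeriv p (fun y => w y * w y) x‖ ≤ _ := h1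
          _ ≤ ((p:ℝ)+1) * (2^m * (B/Θ) * (B/Θ)) := by exact_mod_cast h3
          _ ≤ ((m:ℝ)+1) * 2^m * (B/Θ) * (B/Θ) := by
              nlinarith [mul_nonneg (mul_nonneg (pow_pos (show (0:ℝ)<2 by norm_num) m).le hBΘ) hBΘ, h4]
      have hterm : ∀ i' ∈ Finset.range (m+1), ((m.choose i' : ℝ) * ‖iteratedDeriv i' A x‖ *
          ‖iteratedDeriv (m - i') (fun y => w y * w y) x‖) ≤
          2^m * (2*Real.pi*Cmax*Θ) * (((m:ℝ)+1) * 2^m * (B/Θ) * (B/Θ)) := by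
        intro i' hi'
        have h := Finset.mem_range.mp hi'
        refine mul_le_mul (mul_le_mul (choose_le_two_pow' m i') (hAbound i' (by omega))
          (norm_nonneg _) (by positivity)) (hwwbound (m - i') (by omega)) (norm_nonneg _) ?_
        positivity
      have h5 := Finset.sum_le_card_nsmul _ _ _ hterm
      rw [Finset.card_range, nsmul_eq_mul] at h5
      push_cast at h5
      have h6 : ((m:ℝ)+1) * (2^m * (2*Real.pi*Cmax*Θ) * (((m:ℝ)+1) * 2^m * (B/Θ) * (B/Θ)))
          = ((m+1) * 2^m * (2 * Real.pi * Cmax) * ((m+1) * 2^m * B^2)) / Θ := by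
        field_simp
      have h7 : (((m:ℝ)+1) * 2^m * (2 * Real.pi * Cmax) * (((m:ℝ)+1) * 2^m * B^2)) ≤ B' :=
        le_max_right _ _
      calc ‖iteratedDeriv m (fun y => A y * (w y * w y)) x‖ ≤ _ := hsum
        _ ≤ ((m:ℝ)+1) * (2^m * (2*Real.pi*Cmax*Θ) * (((m:ℝ)+1) * 2^m * (B/Θ) * (B/Θ))) := h5
        _ = ((m+1) * 2^m * (2 * Real.pi * Cmax) * ((m+1) * 2^m * B^2)) / Θ := h6
        _ ≤ B' / Θ := by gcongr

lemma zero_at_left {u : ℝ → ℂ} (hu : Continuous u) {a : ℝ} (h : ∀ x < a, u x = 0) : u a = 0 := by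
  have hc : IsClosed (u ⁻¹' {0}) := (isClosed_singleton).preimage hu
  have hsub : closure (Iio a) ⊆ u ⁻¹' {0} := hc.closure_subset_iff.mpr (fun x hx => h x hx)
  have ha : a ∈ closure (Iio a) := by rw [closure_Iio]; exact self_mem_Iic
  exact hsub ha

lemma zero_at_right {u : ℝ → ℂ} (hu : Continuous u) {b : ℝ} (h : ∀ x > b, u x = 0) : u b = 0 := by
  have hc : IsClosed (u ⁻¹' {0}) := (isClosed_singleton).preimage hu
  have hsub : closure (Ioi b) ⊆ u ⁻¹' {0} := hc.closure_subset_iff.mpr (fun x hx => h x hx)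
  have hb : b ∈ closure (Ioi b) := by rw [closure_Ioi]; exact self_mem_Ici
  exact hsub hb

noncomputable def seqIBP (w g : ℝ → ℂ) : ℕ → ℝ → ℂ
  | 0 => g
  | k+1 => deriv (fun x => seqIBP w g k x * w x)

lemma seqIBP_contDiff {w g : ℝ → ℂ} (hg : ContDiff ℝ (⊤:ℕ∞) g) (hw : ContDiff ℝ (⊤:ℕ∞) w) :
    ∀ k, ContDiff ℝ (⊤:ℕ∞) (seqIBP w g k)
  | 0 => hg
  | (k+1) => by
    have h := (seqIBP_contDiff hg hw k).mul hw
    exact (contDiff_infty_iff_deriv.mp h).2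

lemma seqIBP_support {a b : ℝ} {w g : ℝ → ℂ} (hsupp : tsupport g ⊆ Set.Icc a b) :
    ∀ k, tsupport (seqIBP w g k) ⊆ Set.Icc a b
  | 0 => hsupp
  | (k+1) => by
    have h1 : tsupport (fun x => seqIBP w g k x * w x) ⊆ Set.Icc a b := by
      refine closure_minimal ?_ isClosed_Icc
      intro x hx
      have hx' : seqIBP w g k x ≠ 0 := fun h0 => by
        simp [Function.mem_support, h0] at hx
      exact seqIBP_support hsupp k (subset_closure hx')
    exact closure_minimal (support_deriv_subset.trans h1) isClosed_Icc

lemma seqIBP_endpoints {a b : ℝ} {w g : ℝ → ℂ} (hg : ContDiff ℝ (⊤:ℕ∞) g)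
    (hw : ContDiff ℝ (⊤:ℕ∞) w) (hsupp : tsupport g ⊆ Set.Icc a b) (k : ℕ) :
    seqIBP w g k a = 0 ∧ seqIBP w g k b = 0 := by
  have hcont : Continuous (seqIBP w g k) := (seqIBP_contDiff hg hw k).continuous
  have hzero : ∀ x, x ∉ Set.Icc a b → seqIBP w g k x = 0 := by
    intro x hx
    exact image_eq_zero_of_notMem_tsupport (fun hmem => hx (seqIBP_support hsupp k hmem))
  constructor
  · exact zero_at_left hcont (fun x hx => hzero x (by simp [Set.mem_Icc]; intro h; linarith))
  · exact zero_at_right hcont (fun x hx => hzero x (by simp [Set.mem_Icc]; intro h; linarith))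

lemma seqBound (a b : ℝ) (D : ℕ → ℝ) : ∀ (k n : ℕ), ∃ M : ℝ, 0 < M ∧
    ∀ (g w : ℝ → ℂ) (Θ B : ℝ), 0 < Θ → 0 < B →
    ContDiff ℝ (⊤:ℕ∞) g → ContDiff ℝ (⊤:ℕ∞) w →
    (∀ (j : ℕ) (x : ℝ), ‖iteratedDeriv j g x‖ ≤ D j) →
    (∀ i ≤ k + n, ∀ x ∈ Set.Icc a b, ‖iteratedDeriv i w x‖ ≤ B / Θ) →
    ∀ j ≤ n, ∀ x ∈ Set.Icc a b, ‖iteratedDeriv j (seqIBP w g k) x‖ ≤ M * B^k * (Θ⁻¹)^k := by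
  intro k
  induction k with
  | zero =>
    intro n
    refine ⟨1 + ∑ j ∈ Finset.range (n+1), |D j|, by positivity, ?_⟩
    intro g w Θ B hΘ hB hg hw hD hwB j hj x hx
    simp only [seqIBP, pow_zero, mul_one]
    calc ‖iteratedDeriv j g x‖ ≤ D j := hD j x
      _ ≤ |D j| := le_abs_self _
      _ ≤ ∑ i ∈ Finset.range (n+1), |D i| :=
          Finset.single_le_sum (f := fun i => |D i|) (fun _ _ => abs_nonneg _)
            (Finset.mem_range.mpr (by omega : j < n + 1))
      _ ≤ 1 + ∑ i ∈ Finset.range (n+1), |D i| := by linarith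
  | succ k IH =>
    intro n
    obtain ⟨M, hM, hMb⟩ := IH (n+1)
    refine ⟨((n:ℝ)+2) * 2^(n+1) * M, by positivity, ?_⟩
    intro g w Θ B hΘ hB hg hw hD hwB j hj x hx
    have hu := seqIBP_contDiff hg hw k
    have heq : iteratedDeriv j (seqIBP w g (k+1)) x
        = iteratedDeriv (j+1) (fun x => seqIBP w g k x * w x) x := by
      rw [show seqIBP w g (k+1) = deriv (fun x => seqIBP w g k x * w x) from rfl,
        ← iteratedDeriv_succ']
    rw [heq]
    have hsum := normMulLe hu hw x (j+1)
    have hterm : ∀ i ∈ Finset.range (j+1+1), (((j+1).choose i : ℝ) *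
        ‖iteratedDeriv i (seqIBP w g k) x‖ * ‖iteratedDeriv (j+1-i) w x‖)
        ≤ 2^(n+1) * (M * B^k * (Θ⁻¹)^k) * (B/Θ) := by
      intro i hi
      have hi' := Finset.mem_range.mp hi
      have e1 := hMb g w Θ B hΘ hB hg hw hD
        (fun i0 hi0 x0 hx0 => hwB i0 (by omega) x0 hx0) i (by omega) x hx
      have e2 := hwB (j+1-i) (by omega) x hx
      have e3 : (((j+1)).choose i : ℝ) ≤ 2^(n+1) := (choose_le_two_pow' (j+1) i).trans
        (by exact_mod_cast Nat.pow_le_pow_right (by norm_num) (by omega))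
      exact mul_le_mul (mul_le_mul e3 e1 (norm_nonneg _) (by positivity)) e2
        (norm_nonneg _) (by positivity)
    have h5 := Finset.sum_le_card_nsmul _ _ _ hterm
    rw [Finset.card_range, nsmul_eq_mul] at h5
    push_cast at h5
    calc ‖iteratedDeriv (j+1) (fun x => seqIBP w g k x * w x) x‖ ≤ _ := hsum
      _ ≤ ((j:ℝ)+1+1) * (2^(n+1) * (M * B^k * (Θ⁻¹)^k) * (B/Θ)) := h5
      _ ≤ ((n:ℝ)+2) * (2^(n+1) * (M * B^k * (Θ⁻¹)^k) * (B/Θ)) := by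
          have hj2 : ((j:ℝ)+1+1) ≤ (n:ℝ)+2 := by
            have : (j:ℝ) ≤ (n:ℝ) := by exact_mod_cast hj
            linarith
          have hnn : (0:ℝ) ≤ 2^(n+1) * (M * B^k * (Θ⁻¹)^k) * (B/Θ) := by positivity
          exact mul_le_mul_of_nonneg_right hj2 hnn
      _ = ((n:ℝ)+2) * 2^(n+1) * M * B^(k+1) * (Θ⁻¹)^(k+1) := by
          rw [div_eq_mul_inv]; ring

lemma ibp_step {a b : ℝ} (hab : a ≤ b) {f : ℝ → ℝ} {w u : ℝ → ℂ}
    (hf : ContDiff ℝ (⊤:ℕ∞) f) (hu : ContDiff ℝ (⊤:ℕ∞) u) (hw : ContDiff ℝ (⊤:ℕ∞) w)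
    {V : Set ℝ} (hV : IsOpen V) (hIccV : Set.Icc a b ⊆ V)
    (hne : ∀ x ∈ V, deriv f x ≠ 0)
    (hwV : ∀ x ∈ V, w x = (2 * Real.pi * Complex.I * deriv f x)⁻¹)
    (hua : u a = 0) (hub : u b = 0) :
    ∫ x in a..b, deriv (fun y => u y * w y) x * e2pi (f x)
      = -∫ x in a..b, u x * e2pi (f x) := by
  set φ : ℝ → ℂ := fun x => e2pi (f x) with hφdef
  have hfd : Differentiable ℝ f := hf.differentiable (by simp)
  have hf'c : Continuous (deriv f) := ((contDiff_infty_iff_deriv.mp hf).2).continuous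
  have hφd : ∀ x, HasDerivAt φ (2*(Real.pi:ℂ)*Complex.I*((deriv f x : ℝ):ℂ) * φ x) x := by
    intro x
    have h1 : HasDerivAt (fun y => 2*(Real.pi:ℂ)*Complex.I*((f y : ℝ):ℂ))
        (2*(Real.pi:ℂ)*Complex.I*((deriv f x : ℝ):ℂ)) x :=
      ((hfd x).hasDerivAt.ofReal_comp).const_mul _
    have h2 := h1.cexp
    have h3 : φ = fun y => Complex.exp (2*(Real.pi:ℂ)*Complex.I*((f y : ℝ):ℂ)) := by
      funext y; simp [hφdef, e2pi]
    rw [h3]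
    simpa [mul_comm] using h2
  have hφc : Continuous φ := by
    have : Continuous (fun y => Complex.exp (2*(Real.pi:ℂ)*Complex.I*((f y : ℝ):ℂ))) :=
      Complex.continuous_exp.comp (continuous_const.mul (Complex.continuous_ofReal.comp
        hf.continuous))
    simpa [hφdef, e2pi] using this
  have hud : Differentiable ℝ u := hu.differentiable (by simp)
  have hwd : Differentiable ℝ w := hw.differentiable (by simp)
  have huw : ∀ x, HasDerivAt (fun y => u y * w y) (deriv (fun y => u y * w y) x) x :=
    fun x => (((hud x).mul (hwd x)).hasDerivAt)
  have hΦ : ∀ x, HasDerivAt (fun y => (u y * w y) * φ y)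
      (deriv (fun y => u y * w y) x * φ x
        + (u x * w x) * (2*(Real.pi:ℂ)*Complex.I*((deriv f x : ℝ):ℂ) * φ x)) x :=
    fun x => (huw x).mul (hφd x)
  have hduwc : Continuous (deriv (fun y => u y * w y)) :=
    ((contDiff_infty_iff_deriv.mp (hu.mul hw)).2).continuous
  have hc1 : Continuous (fun x => deriv (fun y => u y * w y) x * φ x) := hduwc.mul hφc
  have hc2 : Continuous (fun x => (u x * w x) *
      (2*(Real.pi:ℂ)*Complex.I*((deriv f x : ℝ):ℂ) * φ x)) :=
    ((hu.continuous.mul hw.continuous)).mul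
      ((continuous_const.mul (Complex.continuous_ofReal.comp hf'c)).mul hφc)
  have hint := intervalIntegral.integral_eq_sub_of_hasDerivAt (f := fun y => (u y * w y) * φ y)
    (fun x _ => hΦ x) ((hc1.add hc2).intervalIntegrable a b (μ := MeasureTheory.volume))
  simp only [hua, hub, zero_mul, sub_zero] at hint
  have hsplit := intervalIntegral.integral_add (hc1.intervalIntegrable a b (μ := MeasureTheory.volume))
    (hc2.intervalIntegrable a b (μ := MeasureTheory.volume))
  rw [hsplit] at hint
  have h2 : ∫ x in a..b, (u x * w x) * (2*(Real.pi:ℂ)*Complex.I*((deriv f x : ℝ):ℂ) * φ x)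
      = ∫ x in a..b, u x * φ x := by
    refine intervalIntegral.integral_congr ?_
    intro x hx
    beta_reduce
    rw [Set.uIcc_of_le hab] at hx
    have hxV := hIccV hx
    have hFne : (2*(Real.pi:ℂ)*Complex.I*((deriv f x : ℝ):ℂ)) ≠ 0 :=
      mul_ne_zero (mul_ne_zero (mul_ne_zero two_ne_zero
        (by exact_mod_cast Real.pi_ne_zero)) Complex.I_ne_zero)
        (Complex.ofReal_ne_zero.mpr (hne x hxV))
    rw [hwV x hxV]
    field_simp [Complex.ofReal_ne_zero.mpr (hne x hxV)]
  rw [h2] at hint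
  show ∫ x in a..b, deriv (fun y => u y * w y) x * φ x = -∫ x in a..b, u x * φ x
  exact eq_neg_of_add_eq_zero_left hint

/-- first derivative bound / non-stationary phase. If `|f'| ≥ Θ` on
`[a,b]`, `|f^{(j)}| ≤ C_j Θ` for `j ≥ 2`, and `g` is smooth, supported in `[a,b]`,
with `|g^{(j)}| ≤ D_j` and all derivatives vanishing at `a` and `b`, then
`|∫_a^b g(x) e(f(x)) dx| ≪_{J,a,b,C,D} Θ^{−J}` for every positive integer `J`. -/
theorem stmt14 (a b : ℝ) (hab : a < b) (C D : ℕ → ℝ) (J : ℕ) (hJ : 0 < J) :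
    ∃ K : ℝ, 0 < K ∧ ∀ (f : ℝ → ℝ) (g : ℝ → ℂ) (Θ : ℝ), 0 < Θ →
      ContDiff ℝ (⊤ : ℕ∞) f → ContDiff ℝ (⊤ : ℕ∞) g →
      (∀ x ∈ Set.Icc a b, Θ ≤ |deriv f x|) →
      (∀ j : ℕ, 2 ≤ j → ∀ x ∈ Set.Icc a b, |iteratedDeriv j f x| ≤ C j * Θ) →
      tsupport g ⊆ Set.Icc a b →
      (∀ (j : ℕ) (x : ℝ), ‖iteratedDeriv j g x‖ ≤ D j) →
      (∀ j : ℕ, iteratedDeriv j g a = 0 ∧ iteratedDeriv j g b = 0) →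
      ‖∫ x in a..b, g x * e2pi (f x)‖ ≤ K * Θ ^ (-(J : ℝ)) := by
  obtain ⟨B, hB, hBbound⟩ := invBound a b C J
  obtain ⟨M, hM, hMbound⟩ := seqBound a b D J 0
  refine ⟨M * B^J * (b - a), mul_pos (mul_pos hM (pow_pos hB J)) (sub_pos.mpr hab), ?_⟩
  intro f g Θ hΘ hf hg hlow hC hsupp hD hvanish
  have hf' : ContDiff ℝ (⊤:ℕ∞) f := hf.of_le (by simp)
  have hg' : ContDiff ℝ (⊤:ℕ∞) g := hg.of_le (by simp)
  have hf'c : Continuous (deriv f) := (contDiff_infty_iff_deriv.mp hf').2.continuous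
  have hV0open : IsOpen {x : ℝ | deriv f x ≠ 0} := isOpen_compl_singleton.preimage hf'c
  have hIccV0 : Set.Icc a b ⊆ {x : ℝ | deriv f x ≠ 0} := by
    intro x hx h0
    have h1 := hlow x hx
    rw [h0] at h1
    simp at h1
    linarith
  obtain ⟨δ, hδ, hthick⟩ :=
    (isCompact_Icc (a := a) (b := b)).exists_thickening_subset_open hV0open hIccV0
  have hIccδ : Set.Icc (a - δ/2) (b + δ/2) ⊆ {x : ℝ | deriv f x ≠ 0} := by
    refine subset_trans ?_ hthick
    intro x hx
    rw [Metric.mem_thickening_iff]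
    refine ⟨max a (min x b), ⟨le_max_left _ _, max_le hab.le (min_le_right _ _)⟩, ?_⟩
    rw [Real.dist_eq]
    rcases le_total x a with h1 | h1
    · rw [min_eq_left (h1.trans hab.le), max_eq_left h1]
      rw [abs_of_nonpos (by linarith)]
      have := hx.1
      linarith
    · rcases le_total x b with h2 | h2
      · rw [min_eq_left h2, max_eq_right h1, sub_self, abs_zero]
        linarith
      · rw [min_eq_right h2, max_eq_right hab.le]
        rw [abs_of_nonneg (by linarith)]
        have := hx.2
        linarith
  have hR : (0:ℝ) < (b-a)/2 := by linarith
  set χ : ContDiffBump ((a+b)/2) :=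
    ⟨(b-a)/2 + δ/4, (b-a)/2 + δ/2, by linarith, by linarith⟩ with hχdef
  have hVopen : IsOpen (Metric.ball ((a+b)/2) ((b-a)/2 + δ/4)) := Metric.isOpen_ball
  have hIccV : Set.Icc a b ⊆ Metric.ball ((a+b)/2) ((b-a)/2 + δ/4) := by
    intro x hx
    rw [Metric.mem_ball, Real.dist_eq]
    have h1 := hx.1
    have h2 := hx.2
    rw [abs_lt]
    constructor <;> linarith
  have hVsub : Metric.ball ((a+b)/2) ((b-a)/2 + δ/4) ⊆ Set.Icc (a - δ/2) (b + δ/2) := by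
    intro x hx
    rw [Metric.mem_ball, Real.dist_eq] at hx
    have h1 := abs_lt.mp hx
    constructor <;> [linarith [h1.1]; linarith [h1.2]]
  have hVV0 : ∀ x ∈ Metric.ball ((a+b)/2) ((b-a)/2 + δ/4), deriv f x ≠ 0 :=
    fun x hx => hIccδ (hVsub hx)
  set w : ℝ → ℂ := fun x => ((χ x : ℝ):ℂ) * (2 * Real.pi * Complex.I * deriv f x)⁻¹ with hwdef
  have hwV : ∀ x ∈ Metric.ball ((a+b)/2) ((b-a)/2 + δ/4),
      w x = (2 * Real.pi * Complex.I * deriv f x)⁻¹ := by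
    intro x hx
    have h1 : χ x = 1 := χ.one_of_mem_closedBall (Metric.ball_subset_closedBall hx)
    rw [hwdef]
    simp [h1]
  have hχsupp : tsupport (χ : ℝ → ℝ) ⊆ {x : ℝ | deriv f x ≠ 0} := by
    rw [χ.tsupport_eq]
    intro x hx
    rw [Real.closedBall_eq_Icc] at hx
    apply hIccδ
    have h1 := hx.1
    have h2 := hx.2
    have e1 : (a+b)/2 - ((b-a)/2 + δ/2) = a - δ/2 := by ring
    have e2 : (a+b)/2 + ((b-a)/2 + δ/2) = b + δ/2 := by ring
    constructor
    · calc a - δ/2 = (a+b)/2 - ((b-a)/2 + δ/2) := e1.symm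
        _ ≤ x := h1
    · calc x ≤ (a+b)/2 + ((b-a)/2 + δ/2) := h2
        _ = b + δ/2 := e2
  have hwcd : ContDiff ℝ (⊤:ℕ∞) w := by
    rw [contDiff_iff_contDiffAt]
    intro x
    by_cases hx : deriv f x ≠ 0
    · have h1 : ContDiffAt ℝ (⊤:ℕ∞) (fun y => ((χ y : ℝ):ℂ)) x :=
        (Complex.ofRealCLM.contDiff.comp χ.contDiff).contDiffAt
      have h2 : ContDiffAt ℝ (⊤:ℕ∞) (fun y => 2 * (Real.pi:ℂ) * Complex.I *
          ((deriv f y : ℝ):ℂ)) x :=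
        (contDiff_const.mul
          (Complex.ofRealCLM.contDiff.comp (contDiff_infty_iff_deriv.mp hf').2)).contDiffAt
      have hne0 : (2 * (Real.pi:ℂ) * Complex.I * ((deriv f x : ℝ):ℂ)) ≠ 0 :=
        mul_ne_zero (mul_ne_zero (mul_ne_zero two_ne_zero
          (by exact_mod_cast Real.pi_ne_zero)) Complex.I_ne_zero)
          (Complex.ofReal_ne_zero.mpr hx)
      exact h1.mul (h2.inv hne0)
    · push_neg at hx
      have hxn : x ∉ tsupport (χ : ℝ → ℝ) := fun h => (hχsupp h) hx
      have hopen : IsOpen (tsupport (χ : ℝ → ℝ))ᶜ := (isClosed_tsupport _).isOpen_compl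
      have hev : w =ᶠ[nhds x] (fun _ => (0:ℂ)) := by
        refine Filter.eventually_of_mem (hopen.mem_nhds hxn) ?_
        intro y hy
        have : (χ : ℝ → ℝ) y = 0 := image_eq_zero_of_notMem_tsupport hy
        simp [hwdef, this]
      exact (contDiffAt_const (c := (0:ℂ))).congr_of_eventuallyEq hev
  have hwB := hBbound f Θ hΘ hf' hlow hC w _ hVopen hIccV hwcd hVV0 hwV
  have hMB := hMbound g w Θ B hΘ hB hg' hwcd hD
    (fun i hi x hx => hwB i (by omega) x hx) 0 le_rfl
  have hIBP : ∀ k, ∫ x in a..b, seqIBP w g k x * e2pi (f x)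
      = (-1:ℂ)^k * ∫ x in a..b, g x * e2pi (f x) := by
    intro k
    induction k with
    | zero => simp [seqIBP]
    | succ k ih =>
      have hend := seqIBP_endpoints hg' hwcd hsupp k
      have hstep := ibp_step hab.le hf' (seqIBP_contDiff hg' hwcd k) hwcd hVopen hIccV
        hVV0 hwV hend.1 hend.2
      rw [show seqIBP w g (k+1) = deriv (fun y => seqIBP w g k y * w y) from rfl]
      rw [hstep, ih]
      ring
  have hone : ∀ t : ℝ, ‖e2pi t‖ = 1 := by
    intro t
    rw [e2pi]
    rw [Complex.norm_exp]
    have : (2 * (Real.pi:ℂ) * Complex.I * (t:ℂ)).re = 0 := by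
      simp [Complex.mul_re, Complex.mul_im]
    rw [this, Real.exp_zero]
  have hnorm : ‖∫ x in a..b, g x * e2pi (f x)‖
      = ‖∫ x in a..b, seqIBP w g J x * e2pi (f x)‖ := by
    rw [hIBP J]
    rw [norm_mul, norm_pow, norm_neg, norm_one, one_pow, one_mul]
  have hendb : ‖∫ x in a..b, seqIBP w g J x * e2pi (f x)‖
      ≤ (M * B^J * (Θ⁻¹)^J) * |b - a| := by
    apply intervalIntegral.norm_integral_le_of_norm_le_const
    intro x hx
    have hx' : x ∈ Set.Icc a b := by
      rw [Set.uIoc_of_le hab.le] at hx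
      exact ⟨hx.1.le, hx.2⟩
    have h1 := hMB x hx'
    rw [iteratedDeriv_zero] at h1
    calc ‖seqIBP w g J x * e2pi (f x)‖ = ‖seqIBP w g J x‖ * ‖e2pi (f x)‖ := norm_mul _ _
      _ = ‖seqIBP w g J x‖ := by rw [hone, mul_one]
      _ ≤ M * B^J * (Θ⁻¹)^J := h1
  have hpow : Θ ^ (-(J:ℝ)) = (Θ⁻¹)^J := by
    rw [Real.rpow_neg hΘ.le, Real.rpow_natCast, inv_pow]
  calc ‖∫ x in a..b, g x * e2pi (f x)‖
      = ‖∫ x in a..b, seqIBP w g J x * e2pi (f x)‖ := hnorm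
    _ ≤ (M * B^J * (Θ⁻¹)^J) * |b - a| := hendb
    _ = (M * B^J * (b - a)) * Θ ^ (-(J:ℝ)) := by
        rw [abs_of_pos (sub_pos.mpr hab), hpow]
        ring
end
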